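/- arXiv:2011.13203 — 2 statements merged into one kernel-verified Lean document; each statement's English description precedes it below -/
import Mathlib

section
/- Agents know their own secrets: for every agent a, agent b, and call sequence σ, if (a,b) ∈ I^σ then (a,b) ∈ I^τ for every τ with σ ∼_a τ; and if (a,b) ∉ I^σ then (a,b) ∉ I^τ for every τ with σ ∼_a τ. (Semantically: S_a b ↔ K_a S_a b and ¬S_a b ↔ K_a ¬S_a b are valid.) -/
variable {A : Type*}

/-- Effect of one call `c` on a secret relation `S`:
`S ∪ ({(x,y),(y,x)} ∘ S)` where `c = (x,y)`. -/
def gstep (S : Set (A × A)) (c : A × A) : Set (A × A) :=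
  S ∪ {p | (p.1 = c.1 ∧ (c.2, p.2) ∈ S) ∨ (p.1 = c.2 ∧ (c.1, p.2) ∈ S)}

/-- `S^σ`: the result of applying the call sequence `σ` to `S`. -/
def applyCalls (S : Set (A × A)) (σ : List (A × A)) : Set (A × A) :=
  σ.foldl gstep S

/-- `I^σ`: the secret relation generated by `σ` from the identity relation. -/
def secrets (σ : List (A × A)) : Set (A × A) :=
  applyCalls {p | p.1 = p.2} σ

/-- `I^σ_x`: the set of secrets agent `x` knows after `σ`. -/
def secretsOf (σ : List (A × A)) (x : A) : Set A :=
  {z | (x, z) ∈ secrets σ}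

/-- The asynchronous epistemic relation `∼ₐ`: the smallest equivalence relation
such that `ε ∼ₐ ε`; if `σ ∼ₐ τ` and `a ∉ {b,c}` then `σ;bc ∼ₐ τ`; and
if `σ ∼ₐ τ` and `I^σ_b = I^τ_b` then `σ;ab ∼ₐ τ;ab` and `σ;ba ∼ₐ τ;ba`. -/
inductive asyncR (a : A) : List (A × A) → List (A × A) → Prop
  | refl (σ) : asyncR a σ σ
  | symm {σ τ} : asyncR a σ τ → asyncR a τ σ
  | trans {σ τ ρ} : asyncR a σ τ → asyncR a τ ρ → asyncR a σ ρ
  | skip {σ τ} {b c : A} : asyncR a σ τ → a ≠ b → a ≠ c →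
      asyncR a (σ ++ [(b, c)]) τ
  | callL {σ τ} {b : A} : asyncR a σ τ → secretsOf σ b = secretsOf τ b →
      asyncR a (σ ++ [(a, b)]) (τ ++ [(a, b)])
  | callR {σ τ} {b : A} : asyncR a σ τ → secretsOf σ b = secretsOf τ b →
      asyncR a (σ ++ [(b, a)]) (τ ++ [(b, a)])


lemma secrets_append (σ : List (A × A)) (c : A × A) :
    secrets (σ ++ [c]) = gstep (secrets σ) c := by
  simp [secrets, applyCalls, List.foldl_append]

lemma secretsOf_skip {a b c : A} (σ : List (A × A)) (h1 : a ≠ b) (h2 : a ≠ c) :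
    secretsOf (σ ++ [(b, c)]) a = secretsOf σ a := by
  ext z
  simp [secretsOf, secrets_append, gstep, h1, h2]

lemma secretsOf_callL {x y : A} (σ : List (A × A)) :
    secretsOf (σ ++ [(x, y)]) x = secretsOf σ x ∪ secretsOf σ y := by
  ext z
  simp only [secretsOf, secrets_append, gstep, Set.mem_union, Set.mem_setOf_eq]
  constructor
  · rintro (h | ⟨-, h⟩ | ⟨rfl, h⟩) <;> tauto
  · tauto

lemma secretsOf_callR {x y : A} (σ : List (A × A)) :
    secretsOf (σ ++ [(y, x)]) x = secretsOf σ x ∪ secretsOf σ y := by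
  ext z
  simp only [secretsOf, secrets_append, gstep, Set.mem_union, Set.mem_setOf_eq]
  constructor
  · rintro (h | ⟨rfl, h⟩ | ⟨-, h⟩) <;> tauto
  · tauto

lemma asyncR_secretsOf {a : A} {σ τ : List (A × A)} (h : asyncR a σ τ) :
    secretsOf σ a = secretsOf τ a := by
  induction h with
  | refl σ => rfl
  | symm _ ih => exact ih.symm
  | trans _ _ ih1 ih2 => exact ih1.trans ih2
  | skip _ h1 h2 ih => rw [secretsOf_skip _ h1 h2, ih]
  | callL _ hb ih => rw [secretsOf_callL, secretsOf_callL, ih, hb]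
  | callR _ hb ih => rw [secretsOf_callR, secretsOf_callR, ih, hb]

/-- Agents know their own secrets: `S_a b ↔ K_a S_a b` and
`¬S_a b ↔ K_a ¬S_a b` are valid. -/
theorem knows_own_secrets (a b : A) (σ : List (A × A)) :
    ((a, b) ∈ secrets σ → ∀ τ, asyncR a σ τ → (a, b) ∈ secrets τ) ∧
    ((a, b) ∉ secrets σ → ∀ τ, asyncR a σ τ → (a, b) ∉ secrets τ) := by
  constructor
  · intro hmem τ h
    have := asyncR_secretsOf h
    have : b ∈ secretsOf τ a := this ▸ hmem
    exact this
  · intro hmem τ h hv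
    have := asyncR_secretsOf h
    exact hmem (this ▸ hv : b ∈ secretsOf σ a)
end

section
/- Calling a super expert makes the caller a super expert: in the engaged-agents semantics, if after σ agent b is a super expert (b knows Exp_A) and the call ab is permitted after σ (a is not a super expert and the protocol condition P_{ab} holds), then after σ;ab agent a is a super expert. Formally, ⊨ K_b^P Exp_A → [ab] K_a^P Exp_A. -/
variable {A : Type*}

/-- `a` is a super expert at `σ` w.r.t. relation `R`: `a` knows `Exp_A`. -/
def SEx (R : A → List (A × A) → List (A × A) → Prop) (x : A)
    (σ : List (A × A)) : Prop :=
  ∀ τ, R x σ τ → secrets τ = (Set.univ : Set (A × A))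

/-- `Q` is closed under the clauses of the engaged-agents asynchronous
epistemic relation for protocol `P`, where the super-expert side conditions
refer to the relation `R` itself. -/
def EngagedClosed (P : A → A → List (A × A) → Prop)
    (R Q : A → List (A × A) → List (A × A) → Prop) : Prop :=
  (∀ a : A, Q a [] []) ∧
  (∀ a σ τ, Q a σ τ → Q a τ σ) ∧
  (∀ a σ τ ρ, Q a σ τ → Q a τ ρ → Q a σ ρ) ∧
  (∀ (a b c : A) σ τ, Q a σ τ → a ≠ b → a ≠ c →
      ¬ SEx R b σ → P b c σ → Q a (σ ++ [(b, c)]) τ) ∧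
  (∀ (a b : A) σ τ, Q a σ τ → secretsOf σ b = secretsOf τ b →
      ¬ SEx R a σ → P a b σ → ¬ SEx R a τ → P a b τ →
      (SEx R b σ ↔ SEx R b τ) →
      Q a (σ ++ [(a, b)]) (τ ++ [(a, b)])) ∧
  (∀ (a b : A) σ τ, Q a σ τ → secretsOf σ b = secretsOf τ b →
      ¬ SEx R b σ → P b a σ → ¬ SEx R b τ → P b a τ →
      (SEx R a σ ↔ SEx R a τ) →
      Q a (σ ++ [(b, a)]) (τ ++ [(b, a)]))

/-- `R` is the engaged-agents asynchronous epistemic relation for protocol `P`: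
the smallest symmetric transitive relation satisfying the clauses. -/
def IsEngagedRel (P : A → A → List (A × A) → Prop)
    (R : A → List (A × A) → List (A × A) → Prop) : Prop :=
  EngagedClosed P R R ∧
  ∀ Q, EngagedClosed P R Q → ∀ a σ τ, R a σ τ → Q a σ τ

/-! ### Auxiliary development -/


/-- list surgery: a concat equals an append-cons decomposition. -/
lemma concat_eq_append_cons {α : Type*} {σ ρ₁ ρ₂ : List α} {x y : α}
    (h : σ ++ [x] = ρ₁ ++ y :: ρ₂) :
    (ρ₁ = σ ∧ y = x ∧ ρ₂ = []) ∨ ∃ ρ₂', ρ₂ = ρ₂' ++ [x] ∧ σ = ρ₁ ++ y :: ρ₂' := by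
  rcases List.eq_nil_or_concat ρ₂ with rfl | ⟨ρ₂', z, rfl⟩
  · left
    have h' : σ ++ [x] = ρ₁ ++ [y] := h
    have := List.append_inj' h' rfl
    exact ⟨this.1.symm, by simpa using this.2.symm, rfl⟩
  · right
    have h' : σ ++ [x] = (ρ₁ ++ y :: ρ₂') ++ [z] := by
      simpa using h
    have := List.append_inj' h' rfl
    refine ⟨ρ₂', ?_, this.1⟩
    have hx : x = z := by simpa using this.2
    simp [hx]

/-- `σ` is `P`-permitted (w.r.t. `R`). -/
def Perm (P : A → A → List (A × A) → Prop)
    (R : A → List (A × A) → List (A × A) → Prop) (ρ : List (A × A)) : Prop :=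
  ∀ ρ₁ b c ρ₂, ρ = ρ₁ ++ (b, c) :: ρ₂ → ¬ SEx R b ρ₁ ∧ P b c ρ₁

lemma perm_nil {P : A → A → List (A × A) → Prop} {R} : Perm P R [] := by
  intro ρ₁ b c ρ₂ h
  exact absurd h.symm (by simp)

lemma perm_prefix {P : A → A → List (A × A) → Prop} {R} {l₁ l₂ : List (A × A)}
    (h : Perm P R (l₁ ++ l₂)) : Perm P R l₁ := by
  intro ρ₁ b c ρ₂ he
  exact h ρ₁ b c (ρ₂ ++ l₂) (by simp [he])

lemma perm_concat {P : A → A → List (A × A) → Prop} {R} {σ : List (A × A)} {b c : A}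
    (h : Perm P R σ) (h1 : ¬ SEx R b σ) (h2 : P b c σ) :
    Perm P R (σ ++ [(b, c)]) := by
  intro ρ₁ d e ρ₂ he
  rcases concat_eq_append_cons he with ⟨rfl, hy, -⟩ | ⟨ρ₂', -, hσ⟩
  · obtain ⟨rfl, rfl⟩ : d = b ∧ e = c := by simpa [Prod.ext_iff] using hy
    exact ⟨h1, h2⟩
  · exact h ρ₁ d e ρ₂' hσ

lemma subset_applyCalls (S : Set (A × A)) (l : List (A × A)) :
    S ⊆ applyCalls S l := by
  induction l generalizing S with
  | nil => exact le_refl _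
  | cons c l ih =>
      refine subset_trans ?_ (ih (gstep S c))
      exact Set.subset_union_left

lemma secrets_univ_append {ρ₁ : List (A × A)} (h : secrets ρ₁ = Set.univ)
    (l : List (A × A)) : secrets (ρ₁ ++ l) = Set.univ := by
  have : secrets (ρ₁ ++ l) = applyCalls (secrets ρ₁) l := by
    simp [secrets, applyCalls, List.foldl_append]
  rw [this, h]
  exact Set.eq_univ_of_univ_subset (subset_applyCalls _ _)

/-- Reflexivity of the engaged relation on permitted sequences. -/
lemma refl_of_perm {P : A → A → List (A × A) → Prop} {R}
    (hR : IsEngagedRel P R) :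
    ∀ ρ, Perm P R ρ → ∀ x, R x ρ ρ := by
  intro ρ
  induction ρ using List.reverseRecOn with
  | nil => intro _ x; exact hR.1.1 x
  | append_singleton ρ c ih =>
    intro hp x
    obtain ⟨b, d⟩ := c
    have hρ : Perm P R ρ := perm_prefix hp
    have hcond := hp ρ b d [] (by simp)
    have hrefl : R x ρ ρ := ih hρ x
    by_cases hxb : x = b
    · subst hxb
      exact hR.1.2.2.2.2.1 x d ρ ρ hrefl rfl hcond.1 hcond.2 hcond.1 hcond.2 Iff.rfl
    · by_cases hxd : x = d
      · subst hxd
        exact hR.1.2.2.2.2.2 x b ρ ρ hrefl rfl hcond.1 hcond.2 hcond.1 hcond.2 Iff.rfl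
      · have h1 : R x (ρ ++ [(b, d)]) ρ :=
          hR.1.2.2.2.1 x b d ρ ρ hrefl hxb hxd hcond.1 hcond.2
        exact hR.1.2.2.1 x _ _ _ h1 (hR.1.2.1 x _ _ h1)

/-- The last call involving `a` in `ρ` was with a super expert. -/
def Good (R : A → List (A × A) → List (A × A) → Prop) (a : A)
    (ρ : List (A × A)) : Prop :=
  ∃ ρ₁ c ρ₂, (ρ = ρ₁ ++ (a, c) :: ρ₂ ∨ ρ = ρ₁ ++ (c, a) :: ρ₂) ∧
    SEx R c ρ₁ ∧ ∀ p ∈ ρ₂, p.1 ≠ a ∧ p.2 ≠ a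

lemma good_nil {R} {a : A} : ¬ Good R a [] := by
  rintro ⟨ρ₁, c, ρ₂, (h | h), -, -⟩ <;> simp at h

lemma good_concat_other {R} {a b c : A} {σ : List (A × A)}
    (hb : b ≠ a) (hc : c ≠ a) :
    Good R a (σ ++ [(b, c)]) ↔ Good R a σ := by
  constructor
  · rintro ⟨ρ₁, e, ρ₂, (h | h), hse, hfree⟩
    · rcases concat_eq_append_cons h with ⟨rfl, hy, -⟩ | ⟨ρ₂', rfl, hσ⟩
      · obtain ⟨h1, -⟩ : a = b ∧ e = c := by simpa [Prod.ext_iff] using hy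
        exact absurd h1.symm hb
      · exact ⟨ρ₁, e, ρ₂', Or.inl hσ, hse, fun p hp => hfree p (List.mem_append_left _ hp)⟩
    · rcases concat_eq_append_cons h with ⟨rfl, hy, -⟩ | ⟨ρ₂', rfl, hσ⟩
      · obtain ⟨-, h2⟩ : e = b ∧ a = c := by simpa [Prod.ext_iff] using hy
        exact absurd h2.symm hc
      · exact ⟨ρ₁, e, ρ₂', Or.inr hσ, hse, fun p hp => hfree p (List.mem_append_left _ hp)⟩
  · rintro ⟨ρ₁, e, ρ₂, (h | h), hse, hfree⟩
    · refine ⟨ρ₁, e, ρ₂ ++ [(b, c)], Or.inl (by simp [h]), hse, ?_⟩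
      intro p hp
      rcases List.mem_append.1 hp with hp | hp
      · exact hfree p hp
      · simp only [List.mem_singleton] at hp; subst hp; exact ⟨hb, hc⟩
    · refine ⟨ρ₁, e, ρ₂ ++ [(b, c)], Or.inr (by simp [h]), hse, ?_⟩
      intro p hp
      rcases List.mem_append.1 hp with hp | hp
      · exact hfree p hp
      · simp only [List.mem_singleton] at hp; subst hp; exact ⟨hb, hc⟩

lemma good_concat_ab {R} {a b : A} {σ : List (A × A)} :
    Good R a (σ ++ [(a, b)]) ↔ SEx R b σ := by
  constructor
  · rintro ⟨ρ₁, e, ρ₂, (h | h), hse, hfree⟩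
    · rcases concat_eq_append_cons h with ⟨rfl, hy, -⟩ | ⟨ρ₂', rfl, -⟩
      · obtain ⟨-, rfl⟩ : a = a ∧ e = b := by simpa [Prod.ext_iff] using hy
        exact hse
      · exact absurd rfl (hfree (a, b) (by simp)).1
    · rcases concat_eq_append_cons h with ⟨rfl, hy, -⟩ | ⟨ρ₂', rfl, -⟩
      · obtain ⟨rfl, rfl⟩ : e = a ∧ a = b := by simpa [Prod.ext_iff] using hy
        exact hse
      · exact absurd rfl (hfree (a, b) (by simp)).1
  · intro h
    exact ⟨σ, b, [], Or.inl rfl, h, by simp⟩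

lemma good_concat_ba {R} {a b : A} {σ : List (A × A)} :
    Good R a (σ ++ [(b, a)]) ↔ SEx R b σ := by
  constructor
  · rintro ⟨ρ₁, e, ρ₂, (h | h), hse, hfree⟩
    · rcases concat_eq_append_cons h with ⟨rfl, hy, -⟩ | ⟨ρ₂', rfl, -⟩
      · obtain ⟨rfl, rfl⟩ : a = b ∧ e = a := by simpa [Prod.ext_iff] using hy
        exact hse
      · exact absurd rfl (hfree (b, a) (by simp)).2
    · rcases concat_eq_append_cons h with ⟨rfl, hy, -⟩ | ⟨ρ₂', rfl, -⟩
      · obtain ⟨rfl, -⟩ : e = b ∧ a = a := by simpa [Prod.ext_iff] using hy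
        exact hse
      · exact absurd rfl (hfree (b, a) (by simp)).2
  · intro h
    exact ⟨σ, b, [], Or.inr rfl, h, by simp⟩

/-- The key invariant is closed under the engaged clauses. -/
lemma invariant_closed {P : A → A → List (A × A) → Prop} {R}
    (hR : IsEngagedRel P R) :
    EngagedClosed P R (fun a σ τ =>
      R a σ τ ∧ Perm P R σ ∧ Perm P R τ ∧ (Good R a σ ↔ Good R a τ)) := by
  obtain ⟨C, -⟩ := hR
  refine ⟨?_, ?_, ?_, ?_, ?_, ?_⟩
  · intro a
    exact ⟨C.1 a, perm_nil, perm_nil, Iff.rfl⟩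
  · rintro a σ τ ⟨h1, h2, h3, h4⟩
    exact ⟨C.2.1 a σ τ h1, h3, h2, h4.symm⟩
  · rintro a σ τ ρ ⟨h1, h2, h3, h4⟩ ⟨g1, g2, g3, g4⟩
    exact ⟨C.2.2.1 a σ τ ρ h1 g1, h2, g3, h4.trans g4⟩
  · rintro a b c σ τ ⟨h1, h2, h3, h4⟩ hab hac hse hp
    exact ⟨C.2.2.2.1 a b c σ τ h1 hab hac hse hp, perm_concat h2 hse hp, h3,
      (good_concat_other hab.symm hac.symm).trans h4⟩
  · rintro a b σ τ ⟨h1, h2, h3, h4⟩ hsec hna hpa hnt hpt hiff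
    exact ⟨C.2.2.2.2.1 a b σ τ h1 hsec hna hpa hnt hpt hiff,
      perm_concat h2 hna hpa, perm_concat h3 hnt hpt,
      good_concat_ab.trans (hiff.trans good_concat_ab.symm)⟩
  · rintro a b σ τ ⟨h1, h2, h3, h4⟩ hsec hnb hpb hnt hpt hiff
    refine ⟨C.2.2.2.2.2 a b σ τ h1 hsec hnb hpb hnt hpt hiff,
      perm_concat h2 hnb hpb, perm_concat h3 hnt hpt, ?_⟩
    rw [good_concat_ba, good_concat_ba]
    exact iff_of_false hnb hnt

/-- Calling a super expert makes the caller a super expert: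
`⊨ K_b^P Exp_A → [ab] K_a^P Exp_A` in the engaged-agents semantics. -/
theorem call_super_expert (P : A → A → List (A × A) → Prop)
    (R : A → List (A × A) → List (A × A) → Prop)
    (hR : IsEngagedRel P R)
    (a b : A) (σ : List (A × A))
    (hb : SEx R b σ) (ha : ¬ SEx R a σ) (hP : P a b σ) :
    SEx R a (σ ++ [(a, b)]) := by
  intro τ hτ
  obtain ⟨-, -, hpτ, hiff⟩ := hR.2 _ (invariant_closed hR) a (σ ++ [(a, b)]) τ hτ
  have hGτ : Good R a τ := hiff.mp (good_concat_ab.mpr hb)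
  obtain ⟨ρ₁, c, ρ₂, hdec, hse, -⟩ := hGτ
  have hdec' : ∃ l, τ = ρ₁ ++ l := by
    rcases hdec with h | h
    · exact ⟨_, h⟩
    · exact ⟨_, h⟩
  obtain ⟨l, rfl⟩ := hdec'
  have hpρ₁ : Perm P R ρ₁ := perm_prefix hpτ
  have hE : secrets ρ₁ = Set.univ := hse ρ₁ (refl_of_perm hR ρ₁ hpρ₁ c)
  exact secrets_univ_append hE l
end
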